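/- There exists a natural number a such that every entry of the matrix (σ^(ℓ^a) − 1)^n, computed in the matrix ring over S, lies in the ideal I; equivalently, the image of σ^(ℓ^a) in GL_n(R_{q,n}) = GL_n(S/I) is unipotent. -/

import Mathlib

set_option linter.unusedSectionVars false
open MvPolynomial Matrix

noncomputable section

/-- Index type for the `2n²` variables: left summand for the entries of `Fr`,
right summand for the entries of `σ`. -/
abbrev MatVar (n : ℕ) : Type := (Fin n × Fin n) ⊕ (Fin n × Fin n)

variable (W : Type) [CommRing W] (n q : ℕ)

/-- The universal matrix `Fr` of indeterminates. -/
def frPoly : Matrix (Fin n) (Fin n) (MvPolynomial (MatVar n) W) :=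
  Matrix.of fun i j => X (Sum.inl (i, j))

/-- The universal matrix `σ` of indeterminates. -/
def sigPoly : Matrix (Fin n) (Fin n) (MvPolynomial (MatVar n) W) :=
  Matrix.of fun i j => X (Sum.inr (i, j))

/-- The element `det Fr · det σ` at which we localize. -/
def detElt : MvPolynomial (MatVar n) W := (frPoly W n).det * (sigPoly W n).det

/-- The localization of the polynomial ring at `det Fr · det σ`. -/
abbrev LocS : Type := Localization.Away (detElt W n)

/-- The matrix `Fr` over the localization. -/
def frLoc : Matrix (Fin n) (Fin n) (LocS W n) :=
  (frPoly W n).map (algebraMap (MvPolynomial (MatVar n) W) (LocS W n))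

/-- The matrix `σ` over the localization. -/
def sigLoc : Matrix (Fin n) (Fin n) (LocS W n) :=
  (sigPoly W n).map (algebraMap (MvPolynomial (MatVar n) W) (LocS W n))

/-- The ideal generated by the `n²` entries of `Fr·σ − σ^q·Fr`. -/
def relIdeal : Ideal (LocS W n) :=
  Ideal.span {x | ∃ i j, x = (frLoc W n * sigLoc W n - sigLoc W n ^ q * frLoc W n) i j}

/-- The ring `S = S_{q,n}`: the polynomial ring over `W` in the `2n²` matrix entries,
localized at `det Fr · det σ`, modulo the `n²` entries of `Fr·σ − σ^q·Fr`. -/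
def Sring : Type := LocS W n ⧸ relIdeal W n q

instance : CommRing (Sring W n q) := Ideal.Quotient.commRing _

instance : Algebra W (Sring W n q) := Ideal.Quotient.algebra _

/-- The universal matrix `Fr` over `S`. -/
def frS : Matrix (Fin n) (Fin n) (Sring W n q) :=
  (frLoc W n).map (Ideal.Quotient.mk (relIdeal W n q))

/-- The universal matrix `σ` over `S`. -/
def sigS : Matrix (Fin n) (Fin n) (Sring W n q) :=
  (sigLoc W n).map (Ideal.Quotient.mk (relIdeal W n q))

/-! The distinguished point `x₀`, its connected component `X⁰`, and the ideal `I`. -/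

variable (l : ℕ) [Fact l.Prime] (k : Type) [Field k] [IsAlgClosed k] [CharP k l]

/-- The Witt vectors `W(k)`. -/
abbrev Wk : Type := WittVector l k

/-- The canonical residue homomorphism `W(k) → k`, `w ↦ w₀`. -/
def resHom : Wk l k →+* k := WittVector.ghostComponent 0

/-- `k` as a `W(k)`-algebra via the residue map. -/
instance : Algebra (Wk l k) k := (resHom l k).toAlgebra

/-- The point with both matrices equal to the identity. -/
def diagVal : MatVar n → k := fun v =>
  Sum.elim (fun ij => if ij.1 = ij.2 then (1 : k) else 0)
    (fun ij => if ij.1 = ij.2 then (1 : k) else 0) v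

/-- Evaluation of polynomials at the identity point. -/
def evalPoly : MvPolynomial (MatVar n) (Wk l k) →ₐ[Wk l k] k := aeval (diagVal n k)

lemma frPoly_eval : (frPoly (Wk l k) n).map (evalPoly n l k) = 1 := by
  ext i j
  simp [frPoly, evalPoly, diagVal, Matrix.one_apply, Matrix.map_apply]

lemma sigPoly_eval : (sigPoly (Wk l k) n).map (evalPoly n l k) = 1 := by
  ext i j
  simp [sigPoly, evalPoly, diagVal, Matrix.one_apply, Matrix.map_apply]

lemma isUnit_eval_detElt : IsUnit (evalPoly n l k (detElt (Wk l k) n)) := by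
  have h1 : (evalPoly n l k) ((frPoly (Wk l k) n).det) = 1 := by
    rw [AlgHom.map_det, AlgHom.mapMatrix_apply, frPoly_eval, Matrix.det_one]
  have h2 : (evalPoly n l k) ((sigPoly (Wk l k) n).det) = 1 := by
    rw [AlgHom.map_det, AlgHom.mapMatrix_apply, sigPoly_eval, Matrix.det_one]
  rw [detElt, _root_.map_mul, h1, h2, mul_one]
  exact isUnit_one

/-- Evaluation at the identity point, extended to the localization. -/
def evalLoc : LocS (Wk l k) n →+* k :=
  Localization.awayLift (evalPoly n l k).toRingHom (detElt (Wk l k) n) (isUnit_eval_detElt n l k)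

lemma evalLoc_algebraMap (x : MvPolynomial (MatVar n) (Wk l k)) :
    evalLoc n l k (algebraMap (MvPolynomial (MatVar n) (Wk l k)) (LocS (Wk l k) n) x) =
      evalPoly n l k x := by
  simp [evalLoc, Localization.awayLift, IsLocalization.Away.lift_eq]

lemma relIdeal_le_ker : relIdeal (Wk l k) n q ≤ RingHom.ker (evalLoc n l k) := by
  rw [relIdeal, Ideal.span_le]
  rintro x ⟨i, j, rfl⟩
  simp only [SetLike.mem_coe, RingHom.mem_ker]
  have hfr : (frLoc (Wk l k) n).map (evalLoc n l k) = 1 := by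
    rw [frLoc, Matrix.map_map]
    have hcomp : (evalLoc n l k) ∘
        (algebraMap (MvPolynomial (MatVar n) (Wk l k)) (LocS (Wk l k) n))
        = evalPoly n l k := by
      funext x; exact evalLoc_algebraMap n l k x
    rw [hcomp]
    exact frPoly_eval n l k
  have hsig : (sigLoc (Wk l k) n).map (evalLoc n l k) = 1 := by
    rw [sigLoc, Matrix.map_map]
    have hcomp : (evalLoc n l k) ∘
        (algebraMap (MvPolynomial (MatVar n) (Wk l k)) (LocS (Wk l k) n))
        = evalPoly n l k := by
      funext x; exact evalLoc_algebraMap n l k x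
    rw [hcomp]
    exact sigPoly_eval n l k
  have key : (frLoc (Wk l k) n * sigLoc (Wk l k) n
      - sigLoc (Wk l k) n ^ q * frLoc (Wk l k) n).map (evalLoc n l k) = 0 := by
    have h0 : (RingHom.mapMatrix (evalLoc n l k) (m := Fin n))
        (frLoc (Wk l k) n * sigLoc (Wk l k) n
          - sigLoc (Wk l k) n ^ q * frLoc (Wk l k) n) = 0 := by
      rw [map_sub, _root_.map_mul, _root_.map_mul, map_pow]
      simp only [RingHom.mapMatrix_apply]
      rw [hfr, hsig]
      simp
    simpa only [RingHom.mapMatrix_apply] using h0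
  calc (evalLoc n l k) ((frLoc (Wk l k) n * sigLoc (Wk l k) n
      - sigLoc (Wk l k) n ^ q * frLoc (Wk l k) n) i j)
      = ((frLoc (Wk l k) n * sigLoc (Wk l k) n
      - sigLoc (Wk l k) n ^ q * frLoc (Wk l k) n).map (evalLoc n l k)) i j := rfl
    _ = 0 := by rw [key]; rfl

/-- Evaluation at the identity point, as a homomorphism `S → k`. -/
def evalS : Sring (Wk l k) n q →+* k :=
  Ideal.Quotient.lift (relIdeal (Wk l k) n q) (evalLoc n l k)
    (fun _ ha => RingHom.mem_ker.mp (relIdeal_le_ker n q l k ha))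

/-- The point `x₀` of `Spec S`: the kernel of the evaluation sending `Fr` and `σ`
to the identity matrix. -/
def x0 : PrimeSpectrum (Sring (Wk l k) n q) :=
  ⟨RingHom.ker (evalS n q l k), RingHom.ker_isPrime _⟩

/-- The connected component `X⁰` of `x₀` in `Spec S`. -/
def Xcomp : Set (PrimeSpectrum (Sring (Wk l k) n q)) := connectedComponent (x0 n q l k)

/-- The ideal `I`: the intersection of all primes belonging to `X⁰`. -/
def Iideal : Ideal (Sring (Wk l k) n q) :=
  ⨅ (P : PrimeSpectrum (Sring (Wk l k) n q)) (_ : P ∈ Xcomp n q l k), P.asIdeal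

/-!
Over an algebraically closed field, `Fr σ Fr⁻¹ = σ^q` makes `z ↦ z^q` a permutation of the at
most `n` eigenvalues of `σ`, so they are all `M`-th roots of unity for `M = q^{n!} - 1` and
`(σ^M - 1)^n = 0`. Evaluating at every geometric point puts the entries of `(σ^M - 1)^n` in
every prime of `S`. Write `M = ℓ^a M'` with `ℓ ∤ M'`. Then `M'` is a unit in `W(k)`, so
`(X - 1)^n` and `(1 + X + ⋯ + X^(M'-1))^n` are coprime, and for `τ = σ^(ℓ^a)` over `S/I` a Bézout
relation gives an idempotent matrix `e` with `(τ - 1)^n e = 0` and `e ≡ 1` modulo `(τ - 1)^n`.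
Its determinant is an idempotent of `S/I` equal to `1` at `x₀`, hence equal to `1` on the
connected set `X⁰`; therefore `e = 1` and `(τ - 1)^n = 0`.
-/

open scoped Nat

theorem spectrum.image_pow_eq_self_of_units_conj {𝕜 A : Type*} [Field 𝕜] [IsAlgClosed 𝕜]
    [Ring A] [Algebra 𝕜 A] {a : A} (u : Aˣ) {q : ℕ} (hq : 0 < q) (h : u * a * u⁻¹ = a ^ q) :
    (· ^ q) '' spectrum 𝕜 a = spectrum 𝕜 a := by
  rw [← spectrum.map_pow_of_pos a hq, ← h, spectrum.units_conjugate]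

theorem Set.Finite.isPeriodicPt_factorial {α : Type*} {s : Set α} (hs : s.Finite) {f : α → α}
    (hf : f '' s = s) {x : α} (hx : x ∈ s) : Function.IsPeriodicPt f (s.ncard)! x := by
  have hmaps : MapsTo f s s := by simpa only [hf] using mapsTo_image f s
  have hbij : BijOn f s s :=
    (hs.surjOn_iff_bijOn_of_mapsTo hmaps).mp (by simpa only [hf] using surjOn_image f s)
  have : Finite s := hs
  have hπ : hbij.equiv ^ (s.ncard)! = 1 := by
    rw [← Nat.card_coe_set_eq, ← Nat.card_perm]
    exact pow_card_eq_one'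
  have := congrArg (fun π : Equiv.Perm s => (π ⟨x, hx⟩ : α)) hπ
  simpa [Function.IsPeriodicPt, Function.IsFixedPt, Equiv.Perm.coe_pow, BijOn.equiv,
    hmaps.iterate_restrict] using this

section MatrixOverField

variable {ι K : Type*} [Fintype ι] [DecidableEq ι] [Field K]

theorem Matrix.ncard_spectrum_le (A : Matrix ι ι K) :
    (spectrum K A).ncard ≤ Fintype.card ι := by
  classical
  have : spectrum K A = ↑A.charpoly.roots.toFinset := by
    ext z
    simp [Matrix.mem_spectrum_iff_isRoot_charpoly, A.charpoly_monic.ne_zero]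
  rw [this, Set.ncard_coe_finset]
  exact (Multiset.toFinset_card_le _).trans
    ((Polynomial.card_roots' _).trans A.charpoly_natDegree_eq_dim.le)

variable [IsAlgClosed K]

open Polynomial in
theorem Matrix.aeval_pow_card_eq_zero_of_forall_mem_spectrum (A : Matrix ι ι K) {g : K[X]}
    (hg : ∀ z ∈ spectrum K A, g.eval z = 0) : aeval A g ^ Fintype.card ι = 0 := by
  have hsplit := IsAlgClosed.splits A.charpoly
  have hcard : Multiset.card A.charpoly.roots = Fintype.card ι := by
    rw [splits_iff_card_roots.mp hsplit, A.charpoly_natDegree_eq_dim]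
  have hdvd : A.charpoly ∣ g ^ Fintype.card ι := by
    rw [hsplit.eq_prod_roots_of_monic A.charpoly_monic, ← hcard, ← Multiset.prod_replicate,
      ← Multiset.map_const']
    refine Multiset.prod_dvd_prod_of_dvd _ _ fun z hz => dvd_iff_isRoot.mpr (hg z ?_)
    exact Matrix.mem_spectrum_iff_isRoot_charpoly.mpr (isRoot_of_mem_roots hz)
  obtain ⟨t, ht⟩ := hdvd
  rw [← map_pow, ht, map_mul, Matrix.aeval_self_charpoly, zero_mul]

theorem Matrix.pow_sub_one_pow_card_eq_zero_of_mul_eq_pow_mul {A F : Matrix ι ι K}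
    (hA : IsUnit A) (hF : IsUnit F) {q : ℕ} (hq : 0 < q) (h : F * A = A ^ q * F) :
    (A ^ (q ^ (Fintype.card ι)! - 1) - 1) ^ Fintype.card ι = 0 := by
  obtain ⟨u, rfl⟩ := hF
  have hconj : (u : Matrix ι ι K) * A * (↑u⁻¹ : Matrix ι ι K) = A ^ q := by
    rw [h, Units.mul_inv_cancel_right]
  have hspec := spectrum.image_pow_eq_self_of_units_conj (𝕜 := K) u hq hconj
  obtain ⟨t, ht⟩ := Nat.factorial_dvd_factorial A.ncard_spectrum_le
  have hpos : q ^ (Fintype.card ι)! ≠ 0 := by positivity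
  have key := A.aeval_pow_card_eq_zero_of_forall_mem_spectrum
    (g := Polynomial.X ^ (q ^ (Fintype.card ι)! - 1) - 1)
  rw [map_sub, map_pow, Polynomial.aeval_X, map_one] at key
  refine key fun z hz => ?_
  have hz0 : z ≠ 0 := by rintro rfl; exact (spectrum.zero_mem_iff K).mp hz hA
  have hper := (A.finite_spectrum.isPeriodicPt_factorial hspec hz).mul_const t
  rw [← ht, Function.IsPeriodicPt, Function.IsFixedPt, pow_iterate] at hper
  rw [Polynomial.eval_sub, Polynomial.eval_pow, Polynomial.eval_X, Polynomial.eval_one,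
    sub_eq_zero]
  exact mul_right_cancel₀ hz0 (by rw [pow_sub_one_mul hpos, one_mul]; exact hper)

end MatrixOverField

theorem Matrix.pow_sub_one_pow_card_apply_mem_of_mul_eq_pow_mul {ι R : Type*} [Fintype ι]
    [DecidableEq ι] [CommRing R] {A F : Matrix ι ι R} (hA : IsUnit A.det) (hF : IsUnit F.det)
    {q : ℕ} (hq : 0 < q) (h : F * A = A ^ q * F) (P : Ideal R) [P.IsPrime] (i j : ι) :
    ((A ^ (q ^ (Fintype.card ι)! - 1) - 1) ^ Fintype.card ι) i j ∈ P := by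
  let f : R →+* AlgebraicClosure P.ResidueField :=
    (algebraMap P.ResidueField _).comp (algebraMap R P.ResidueField)
  have hunit {B : Matrix ι ι R} (hB : IsUnit B.det) : IsUnit (f.mapMatrix B) := by
    rw [Matrix.isUnit_iff_isUnit_det, ← RingHom.map_det]
    exact hB.map f
  have key := Matrix.pow_sub_one_pow_card_eq_zero_of_mul_eq_pow_mul (hunit hA) (hunit hF) hq
    (by simpa only [map_mul, map_pow] using congrArg f.mapMatrix h)
  rw [← map_one f.mapMatrix, ← map_pow, ← map_sub, ← map_pow] at key
  rw [← Ideal.algebraMap_residueField_eq_zero, ← map_eq_zero_iff _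
    (algebraMap P.ResidueField (AlgebraicClosure P.ResidueField)).injective]
  exact congrFun (congrFun key i) j

theorem Polynomial.isCoprime_X_sub_C_of_isUnit_eval {R : Type*} [CommRing R] {p : Polynomial R}
    {a : R} (h : IsUnit (p.eval a)) : IsCoprime (Polynomial.X - Polynomial.C a) p := by
  obtain ⟨V, hV⟩ := Polynomial.X_sub_C_dvd_sub_C_eval (a := a) (p := p)
  rw [show p = Polynomial.C (p.eval a) * 1 + (Polynomial.X - Polynomial.C a) * V by
    rw [← hV]; ring]
  exact ((isCoprime_mul_unit_left_right (Polynomial.isUnit_C.mpr h) _ 1).mpr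
    isCoprime_one_right).add_mul_left_right V

open Polynomial in
theorem exists_isIdempotentElem_of_pow_sub_one_pow_eq_zero {R A : Type*} [CommRing R] [Ring A]
    [Algebra R A] {a : A} {m N : ℕ} (hm : IsUnit (m : R)) (ha : (a ^ m - 1) ^ N = 0) :
    ∃ e c : A, IsIdempotentElem e ∧ (a - 1) ^ N * e = 0 ∧ 1 - e = c * (a - 1) ^ N := by
  set g : R[X] := ∑ i ∈ Finset.range m, Polynomial.X ^ i
  obtain ⟨c, d, hcd⟩ := (Polynomial.isCoprime_X_sub_C_of_isUnit_eval (p := g) (a := 1)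
    (by simpa [g] using hm)).pow (m := N) (n := N)
  rw [Polynomial.C_1] at hcd
  have hf : aeval a ((Polynomial.X - 1 : R[X]) ^ N) = (a - 1) ^ N := by simp
  have hfg : aeval a ((Polynomial.X - 1) ^ N * g ^ N) = 0 := by
    rw [← mul_pow, mul_comm, geom_sum_mul, map_pow, map_sub, map_pow, Polynomial.aeval_X,
      map_one, ha]
  have hsum : aeval a (c * (Polynomial.X - 1) ^ N) + aeval a (d * g ^ N) = 1 := by
    rw [← map_add, hcd, map_one]
  refine ⟨aeval a (d * g ^ N), aeval a c, ?_, ?_, ?_⟩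
  · have hcross : aeval a (d * g ^ N) * aeval a (c * (Polynomial.X - 1) ^ N) = 0 := by
      rw [← map_mul, show d * g ^ N * (c * (Polynomial.X - 1) ^ N)
        = d * c * ((Polynomial.X - 1) ^ N * g ^ N) by ring, map_mul, hfg, mul_zero]
    rw [IsIdempotentElem]
    nth_rewrite 2 [eq_sub_of_add_eq' hsum]
    rw [mul_sub, mul_one, hcross, sub_zero]
  · rw [← hf, ← map_mul, mul_left_comm, map_mul, hfg, mul_zero]
  · rw [← hf, ← map_mul, ← hsum, add_sub_cancel_right]

namespace PrimeSpectrum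

variable {R : Type*} [CommRing R] {X : Set (PrimeSpectrum R)}

theorem one_sub_mem_vanishingIdeal_of_isPreconnected (hX : IsPreconnected X)
    {x : PrimeSpectrum R} (hx : x ∈ X) {d : R} (hd : d * (1 - d) ∈ vanishingIdeal X)
    (hdx : d ∉ x.asIdeal) : 1 - d ∈ vanishingIdeal X := by
  rw [mem_vanishingIdeal] at hd ⊢
  by_contra! hP
  obtain ⟨P, hPX, hP⟩ := hP
  have hcover : X ⊆ basicOpen d ∪ basicOpen (1 - d) := fun Q _ => by
    by_contra! hQ
    simp only [Set.mem_union, SetLike.mem_coe, mem_basicOpen, not_or, not_not] at hQ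
    exact Q.isPrime.ne_top ((Ideal.eq_top_iff_one _).mpr (by simpa using add_mem hQ.1 hQ.2))
  obtain ⟨Q, hQX, hQd, hQd'⟩ := hX _ _ (basicOpen d).isOpen (basicOpen (1 - d)).isOpen hcover
    ⟨x, hx, hdx⟩ ⟨P, hPX, hP⟩
  exact (Q.isPrime.mem_or_mem (hd Q hQX)).elim hQd hQd'

theorem pow_sub_one_pow_apply_mem_vanishingIdeal_of_isPreconnected {ι T : Type*} [Fintype ι]
    [DecidableEq ι] [CommRing T] [IsDomain T] (hX : IsPreconnected X) {ψ : R →+* T}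
    (hψ : ⟨RingHom.ker ψ, RingHom.ker_isPrime ψ⟩ ∈ X) {A : Matrix ι ι R} (hA : A.map ψ = 1)
    {m N : ℕ} (hm : IsUnit (m : R)) (hN : N ≠ 0)
    (hAm : ∀ i j, ((A ^ m - 1) ^ N) i j ∈ vanishingIdeal X) (i j : ι) :
    ((A - 1) ^ N) i j ∈ vanishingIdeal X := by
  set π := Ideal.Quotient.mk (vanishingIdeal X)
  have hπ {B : Matrix ι ι R} : π.mapMatrix B = 0 ↔ ∀ i j, B i j ∈ vanishingIdeal X := by
    simp [← Matrix.ext_iff, π, Ideal.Quotient.eq_zero_iff_mem]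
  let ψ' := Ideal.Quotient.lift _ ψ fun a ha => (mem_vanishingIdeal X a).mp ha _ hψ
  have hψ' : ψ'.comp π = ψ := Ideal.Quotient.lift_comp_mk _ _ _
  have hAm' : (π.mapMatrix A ^ m - 1) ^ N = 0 := by
    rw [← map_one π.mapMatrix, ← map_pow, ← map_sub, ← map_pow, hπ]
    exact hAm
  obtain ⟨e, c, he, hAe, hec⟩ :=
    exists_isIdempotentElem_of_pow_sub_one_pow_eq_zero (hm.map π) hAm'
  have hA' : ψ'.mapMatrix (π.mapMatrix A) = 1 := by
    rw [RingHom.mapMatrix_apply, RingHom.mapMatrix_apply, Matrix.map_map, ← RingHom.coe_comp,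
      hψ', hA]
  have he1 : ψ'.mapMatrix e = 1 := by
    have := congrArg ψ'.mapMatrix hec
    rwa [map_sub, map_one, map_mul, map_pow, map_sub, map_one, hA', sub_self, zero_pow hN,
      mul_zero, sub_eq_zero, eq_comm] at this
  obtain ⟨d, hd⟩ := Ideal.Quotient.mk_surjective e.det
  have hdet : e.det = 1 := by
    have hdx : d ∉ RingHom.ker ψ := by
      rw [RingHom.mem_ker, ← hψ', RingHom.comp_apply, hd, RingHom.map_det, he1, det_one]
      exact one_ne_zero
    have hd1 := one_sub_mem_vanishingIdeal_of_isPreconnected hX hψ (d := d) (by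
      rw [← Ideal.Quotient.eq_zero_iff_mem, map_mul, map_sub, map_one, hd]
      exact (he.map detMonoidHom).mul_one_sub_self) hdx
    rwa [← Ideal.Quotient.eq_zero_iff_mem, map_sub, map_one, hd, sub_eq_zero, eq_comm] at hd1
  have he1 : e = 1 := (IsIdempotentElem.iff_eq_one_of_isUnit
    ((Matrix.isUnit_iff_isUnit_det e).mpr (hdet ▸ isUnit_one))).mp he
  rw [he1, mul_one, ← map_one π.mapMatrix, ← map_sub, ← map_pow, hπ] at hAe
  exact hAe i j

end PrimeSpectrum

theorem WittVector.isUnit_natCast_of_not_dvd {p : ℕ} [Fact p.Prime] {K : Type*} [Field K]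
    [CharP K p] {m : ℕ} (hm : ¬p ∣ m) : IsUnit (m : WittVector p K) := by
  refine isUnit_of_coeff_zero_ne_zero _ ?_
  rw [← WittVector.constantCoeff_apply, map_natCast]
  exact (CharP.cast_eq_zero_iff K p m).not.mpr hm

theorem frS_mul_sigS : frS W n q * sigS W n q = sigS W n q ^ q * frS W n q := by
  rw [← sub_eq_zero]
  have : (Ideal.Quotient.mk (relIdeal W n q)).mapMatrix
      (frLoc W n * sigLoc W n - sigLoc W n ^ q * frLoc W n) = 0 := by
    ext i j
    exact Ideal.Quotient.eq_zero_iff_mem.mpr (Ideal.subset_span ⟨i, j, rfl⟩)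
  rwa [map_sub, map_mul, map_mul, map_pow] at this

theorem isUnit_det_frS_and_isUnit_det_sigS :
    IsUnit (frS W n q).det ∧ IsUnit (sigS W n q).det := by
  have hdet : IsUnit (Ideal.Quotient.mk (relIdeal W n q)
      (algebraMap _ (LocS W n) ((frPoly W n).det * (sigPoly W n).det))) :=
    (IsLocalization.Away.algebraMap_isUnit (detElt W n)).map _
  rw [map_mul, map_mul, IsUnit.mul_iff] at hdet
  simp only [RingHom.map_det] at hdet
  exact hdet

theorem sigS_map_evalS : (sigS (Wk l k) n q).map (evalS n q l k) = 1 := by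
  ext i j
  exact (evalLoc_algebraMap n l k _).trans (congrFun (congrFun (sigPoly_eval n l k) i) j)

theorem statement_10 (hq2 : 2 ≤ q) (hn : 1 ≤ n) :
    ∃ a : ℕ, ∀ i j : Fin n,
      ((sigS (Wk l k) n q ^ (l ^ a) - 1) ^ n) i j ∈ Iideal n q l k := by
  set M := q ^ n.factorial - 1
  have hM : M ≠ 0 := Nat.sub_ne_zero_of_lt (Nat.one_lt_pow (Nat.factorial_ne_zero n) hq2)
  obtain ⟨hFr, hσ⟩ := isUnit_det_frS_and_isUnit_det_sigS (Wk l k) n q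
  have hσM : ∀ i j, ((sigS (Wk l k) n q ^ M - 1) ^ n) i j ∈ Iideal n q l k := fun i j =>
    (PrimeSpectrum.mem_vanishingIdeal _ _).mpr fun P _ => by
      simpa [M] using Matrix.pow_sub_one_pow_card_apply_mem_of_mul_eq_pow_mul hσ hFr
        (by omega) (frS_mul_sigS _ n q) P.asIdeal i j
  refine ⟨M.factorization l,
    PrimeSpectrum.pow_sub_one_pow_apply_mem_vanishingIdeal_of_isPreconnected
      isPreconnected_connectedComponent mem_connectedComponent (ψ := evalS n q l k) ?_
      (m := ordCompl[l] M) ?_ (by omega) ?_⟩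
  · rw [← RingHom.mapMatrix_apply, map_pow, RingHom.mapMatrix_apply, sigS_map_evalS, one_pow]
  · simpa using (WittVector.isUnit_natCast_of_not_dvd (Nat.not_dvd_ordCompl Fact.out hM)).map
      (algebraMap (Wk l k) (Sring (Wk l k) n q))
  · rwa [← pow_mul, Nat.ordProj_mul_ordCompl_eq_self]
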